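/- For the 8-stage method of eq. (3), the symmetric matrix M with m_{ij} = b_i a_{ij} + b_j a_{ji} - b_i b_j satisfies M Φ = 0 for Φ ∈ {𝟙, c, c², Ac}, hence every condition Φ(t₁)ᵀ M Φ(t₂) = 0 with |t₁| + |t₂| ≤ 8 holds and the method is pseudo-symplectic of order (4, 8). -/

import Mathlib

open Matrix

noncomputable def c₂ : ℝ := 1/2 - Real.sin (2*Real.pi/9) / Real.sqrt 3
noncomputable def c₃ : ℝ := 1/2 - Real.sin (Real.pi/9) / Real.sqrt 3

noncomputable def c8 : Fin 8 → ℝ := ![0, c₂, c₃, 1/2, 1/2, 1-c₃, 1-c₂, 1]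

noncomputable def b8 : Fin 8 → ℝ :=
  ![c₂/2, c₃/2, 1/4-c₂, 0, 1/2+c₂-c₃, 1/4-c₂, c₃/2, c₂/2]

noncomputable def A8 : Matrix (Fin 8) (Fin 8) ℝ :=
  !![0,        0,           0,          0,        0,           0,        0,   0;
     c₂,       0,           0,          0,        0,           0,        0,   0;
     0,        c₃,          0,          0,        0,           0,        0,   0;
     1/2-c₂,   c₂+c₃-1,     1-c₃,       0,        0,           0,        0,   0;
     2*c₂*c₃,  (1-2*c₃)*c₃, (1-4*c₂)*c₃, 4*c₂*c₃, 0,           0,        0,   0;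
     0,        c₃,          0,          4*c₂-2,   1/(2*c₂)-2,  0,        0,   0;
     c₂,       0,           1/2-2*c₂,   2-4*c₂,   6*c₂-2,      1/2-2*c₂, 0,   0;
     0,        c₃,          0,          4*c₂-2,   1/(2*c₂)-2,  0,        c₃,  0]

noncomputable def M8 : Matrix (Fin 8) (Fin 8) ℝ :=
  fun i j => b8 i * A8 i j + b8 j * A8 j i - b8 i * b8 j

inductive RTree where
  | node : List RTree → RTree

/-- Number of vertices of a rooted tree. -/
def RTree.order : RTree → ℕ
  | .node ts => 1 + (ts.attach.map fun t => RTree.order t.1).sum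
decreasing_by simp only [RTree.node.sizeOf_spec]; have := List.sizeOf_lt_of_mem t.2; omega

/-- Derivative weights of the method for a rooted tree. -/
noncomputable def RTree.phi : RTree → (Fin 8 → ℝ)
  | .node ts => fun i => (ts.attach.map fun t => A8.mulVec (RTree.phi t.1) i).prod
decreasing_by simp only [RTree.node.sizeOf_spec]; have := List.sizeOf_lt_of_mem t.2; omega

/-!
The nodes satisfy `c₃ = 7 c₂ - 6 c₂² - 1/2`, and `c₂` is a root of `24 x³ - 36 x² + 12 x - 1`
(the triple-angle formula at `2π/9`), so every entry of `A8`, `b8` and `M8` lies in `ℚ(c₂)` and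
every identity between them is polynomial arithmetic modulo that cubic.

A tree of order at most three has weight vector `𝟙`, `c`, `c²` or `Ac`, all in the kernel of the
symmetric matrix `M8`, which settles every pair in which one tree has order at most three. In the
remaining pairs both trees have order four. `M8` maps the four weight vectors of order four
(`c³`, `c·Ac`, `Ac²`, `A²c`) into the line through `e₃ - e₄` (stages indexed from `0`), while
rows `3` and `4` of `A8` agree on `𝟙`, `c`, `c²`, `Ac`, so every weight vector of order at most
four has equal entries `3` and `4` and is orthogonal to that line.
-/

open Real

lemma sin_two_pi_div_nine : sin (2 * π / 9) = √3 * (1 / 2 - c₂) := by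
  rw [c₂]
  field_simp
  ring

lemma c₂_cubic : 24 * c₂ ^ 3 - 36 * c₂ ^ 2 + 12 * c₂ - 1 = 0 := by
  have h := sin_three_mul (2 * π / 9)
  rw [show 3 * (2 * π / 9) = π - π / 3 by ring, sin_pi_sub, sin_pi_div_three,
    sin_two_pi_div_nine] at h
  have h3 : √3 ^ 2 = 3 := sq_sqrt (by norm_num)
  have : √3 * (24 * c₂ ^ 3 - 36 * c₂ ^ 2 + 12 * c₂ - 1) = 0 := by
    linear_combination (-2) * h + 8 * √3 * (1 / 2 - c₂) ^ 3 * h3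
  exact (mul_eq_zero.1 this).resolve_left (by positivity)

lemma c₃_eq : c₃ = 7 * c₂ - 6 * c₂ ^ 2 - 1 / 2 := by
  -- `sin (2π/9) - sin (π/9) = 2 cos (π/6) sin (π/18) = √3 cos (4π/9)`
  have h := sin_sub_sin (2 * π / 9) (π / 9)
  rw [show (2 * π / 9 - π / 9) / 2 = π / 2 - 2 * (2 * π / 9) by ring,
    show (2 * π / 9 + π / 9) / 2 = π / 6 by ring, sin_pi_div_two_sub, cos_two_mul_eq_one_sub,
    cos_pi_div_six, sin_two_pi_div_nine] at h
  have h3 : √3 ^ 2 = 3 := sq_sqrt (by norm_num)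
  have hs : sin (π / 9) = √3 * (1 - 7 * c₂ + 6 * c₂ ^ 2) := by
    linear_combination (-1) * h + 2 * √3 * (1 / 2 - c₂) ^ 2 * h3
  rw [c₃, hs, mul_div_cancel_left₀ _ (by positivity)]
  ring

lemma one_div_two_mul_c₂ : 1 / (2 * c₂) = 12 * c₂ ^ 2 - 18 * c₂ + 6 :=
  (eq_one_div_of_mul_eq_one_right (by linear_combination c₂_cubic)).symm

section StageArithmetic

set_option maxHeartbeats 1000000

lemma A8_mulVec_one : A8 *ᵥ 1 = c8 := by
  ext i
  fin_cases i <;>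
    simp only [mulVec, dotProduct, Fin.sum_univ_eight, A8, c8, of_apply, cons_val', cons_val,
      cons_val_zero, cons_val_one, cons_val_fin_one, Fin.zero_eta, Fin.mk_one, Fin.reduceFinMk,
      Fin.isValue, Pi.one_apply, add_zero, zero_add, mul_one, one_div_two_mul_c₂, c₃_eq] <;>
    grind [c₂_cubic]

lemma M8_mulVec_eq_zero {v : Fin 8 → ℝ}
    (hv : v ∈ ({1, c8, c8 ^ 2, A8 *ᵥ c8} : Set (Fin 8 → ℝ))) : M8 *ᵥ v = 0 := by
  rcases hv with rfl | rfl | rfl | rfl <;> ext i <;> fin_cases i <;>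
    simp only [mulVec, dotProduct, Fin.sum_univ_eight, M8, A8, b8, c8, of_apply, cons_val',
      cons_val, cons_val_zero, cons_val_one, cons_val_fin_one, Fin.zero_eta, Fin.mk_one,
      Fin.reduceFinMk, Fin.isValue, Pi.one_apply, Pi.zero_apply, Pi.pow_apply, mul_zero,
      zero_mul, add_zero, zero_add, mul_one, one_div_two_mul_c₂, c₃_eq] <;>
    grind [c₂_cubic]

lemma A8_mulVec_apply_three_eq_four {v : Fin 8 → ℝ}
    (hv : v ∈ ({1, c8, c8 ^ 2, A8 *ᵥ c8} : Set (Fin 8 → ℝ))) : (A8 *ᵥ v) 3 = (A8 *ᵥ v) 4 := by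
  rcases hv with rfl | rfl | rfl | rfl <;>
    simp only [mulVec, dotProduct, Fin.sum_univ_eight, A8, c8, of_apply, cons_val', cons_val,
      cons_val_zero, cons_val_one, cons_val_fin_one, Fin.isValue, Pi.one_apply, Pi.pow_apply,
      mul_zero, zero_mul, add_zero, zero_add, mul_one, one_div_two_mul_c₂, c₃_eq] <;>
    grind [c₂_cubic]

lemma exists_M8_mulVec_eq_smul {v : Fin 8 → ℝ}
    (hv : v ∈ ({c8 ^ 3, c8 * (A8 *ᵥ c8), A8 *ᵥ c8 ^ 2, A8 *ᵥ (A8 *ᵥ c8)} : Set (Fin 8 → ℝ))) :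
    ∃ μ : ℝ, M8 *ᵥ v = μ • (Pi.single 3 1 - Pi.single 4 1) := by
  rcases hv with rfl | rfl | rfl | rfl <;>
    [refine ⟨1 / 48 - 5 / 24 * c₂ + c₂ ^ 2 / 4, ?_⟩; refine ⟨-c₂ ^ 2 / 12, ?_⟩;
      refine ⟨1 / 48 - 5 / 24 * c₂ + c₂ ^ 2 / 4, ?_⟩; refine ⟨-c₂ ^ 2 / 12, ?_⟩] <;>
    ext i <;> fin_cases i <;>
    simp only [mulVec, dotProduct, Fin.sum_univ_eight, M8, A8, b8, c8, of_apply, cons_val',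
      cons_val, cons_val_zero, cons_val_one, cons_val_fin_one, Fin.zero_eta, Fin.mk_one,
      Fin.reduceFinMk, Fin.isValue, Pi.pow_apply, Pi.mul_apply, Pi.smul_apply, Pi.sub_apply,
      Pi.single_apply, Fin.reduceEq, ↓reduceIte, smul_eq_mul, mul_zero, zero_mul, add_zero,
      zero_add, mul_one, one_div_two_mul_c₂, c₃_eq] <;>
    grind [c₂_cubic]

end StageArithmetic

lemma M8_isSymm : M8.IsSymm := by
  ext i j
  simp only [transpose_apply, M8]
  ring

namespace RTree

lemma order_node (ts : List RTree) : (node ts).order = 1 + (ts.map order).sum := by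
  rw [order, List.attach_map_val (f := order)]

lemma phi_node (ts : List RTree) :
    (node ts).phi = fun i => (ts.map fun t : RTree => (A8 *ᵥ t.phi) i).prod := by
  rw [phi]
  funext i
  exact congrArg List.prod (List.attach_map_val (f := fun t : RTree => (A8 *ᵥ t.phi) i))

lemma one_le_order (t : RTree) : 1 ≤ t.order := by
  obtain ⟨ts⟩ := t
  rw [order_node]
  omega

lemma order_lt_order_node {s : RTree} {ts : List RTree} (hs : s ∈ ts) :
    s.order < (node ts).order := by
  have := List.le_sum_of_mem (List.mem_map_of_mem (f := order) hs)
  rw [order_node]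
  omega

lemma order_node_cons (a : RTree) (ts : List RTree) :
    (node (a :: ts)).order = a.order + (node ts).order := by
  simp only [order_node, List.map_cons, List.sum_cons]
  omega

lemma phi_node_cons (a : RTree) (ts : List RTree) :
    (node (a :: ts)).phi = (A8 *ᵥ a.phi) * (node ts).phi := by
  simp only [phi_node, List.map_cons, List.prod_cons]
  rfl

lemma phi_of_order_eq_one {t : RTree} (h : t.order = 1) : t.phi = 1 := by
  obtain ⟨_ | ⟨a, ts⟩⟩ := t
  · simp only [phi_node, List.map_nil, List.prod_nil]
    rfl
  · have := a.one_le_order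
    have := (node ts).one_le_order
    rw [order_node_cons] at h
    omega

lemma exists_butcherProduct {t : RTree} (h : 1 < t.order) :
    ∃ a u : RTree, t.order = a.order + u.order ∧ t.phi = (A8 *ᵥ a.phi) * u.phi := by
  obtain ⟨_ | ⟨a, ts⟩⟩ := t
  · simp [order_node] at h
  · exact ⟨a, node ts, order_node_cons a ts, phi_node_cons a ts⟩

lemma phi_of_order_eq_two {t : RTree} (h : t.order = 2) : t.phi = c8 := by
  obtain ⟨a, u, ho, hphi⟩ := exists_butcherProduct (by omega : 1 < t.order)
  have := a.one_le_order
  have := u.one_le_order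
  rw [hphi, phi_of_order_eq_one (by omega : a.order = 1),
    phi_of_order_eq_one (by omega : u.order = 1), A8_mulVec_one, mul_one]

lemma phi_of_order_eq_three {t : RTree} (h : t.order = 3) :
    t.phi = c8 ^ 2 ∨ t.phi = A8 *ᵥ c8 := by
  obtain ⟨a, u, ho, hphi⟩ := exists_butcherProduct (by omega : 1 < t.order)
  have := a.one_le_order
  have := u.one_le_order
  obtain ⟨ha, hu⟩ | ⟨ha, hu⟩ : a.order = 1 ∧ u.order = 2 ∨ a.order = 2 ∧ u.order = 1 := by
    omega
  · rw [hphi, phi_of_order_eq_one ha, phi_of_order_eq_two hu, A8_mulVec_one, sq]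
    exact Or.inl rfl
  · rw [hphi, phi_of_order_eq_two ha, phi_of_order_eq_one hu, mul_one]
    exact Or.inr rfl

lemma phi_mem_of_order_le_three {t : RTree} (h : t.order ≤ 3) :
    t.phi ∈ ({1, c8, c8 ^ 2, A8 *ᵥ c8} : Set (Fin 8 → ℝ)) := by
  have := t.one_le_order
  interval_cases ht : t.order
  · exact Or.inl (phi_of_order_eq_one ht)
  · exact Or.inr (Or.inl (phi_of_order_eq_two ht))
  · exact Or.inr (Or.inr (phi_of_order_eq_three ht))

lemma phi_mem_of_order_eq_four {t : RTree} (h : t.order = 4) :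
    t.phi ∈ ({c8 ^ 3, c8 * (A8 *ᵥ c8), A8 *ᵥ c8 ^ 2, A8 *ᵥ (A8 *ᵥ c8)} : Set (Fin 8 → ℝ)) := by
  obtain ⟨a, u, ho, hphi⟩ := exists_butcherProduct (by omega : 1 < t.order)
  have := a.one_le_order
  have := u.one_le_order
  obtain ⟨ha, hu⟩ | ⟨ha, hu⟩ | ⟨ha, hu⟩ :
      a.order = 1 ∧ u.order = 3 ∨ a.order = 2 ∧ u.order = 2 ∨ a.order = 3 ∧ u.order = 1 := by
    omega
  · rw [hphi, phi_of_order_eq_one ha, A8_mulVec_one]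
    rcases phi_of_order_eq_three hu with hu | hu <;> rw [hu]
    · exact Or.inl (pow_succ' c8 2).symm
    · exact Or.inr (Or.inl rfl)
  · rw [hphi, phi_of_order_eq_two ha, phi_of_order_eq_two hu, mul_comm]
    exact Or.inr (Or.inl rfl)
  · rw [hphi, phi_of_order_eq_one hu, mul_one]
    rcases phi_of_order_eq_three ha with ha | ha <;> rw [ha]
    · exact Or.inr (Or.inr (Or.inl rfl))
    · exact Or.inr (Or.inr (Or.inr rfl))

lemma phi_apply_three_eq_four {t : RTree} (h : t.order ≤ 4) : t.phi 3 = t.phi 4 := by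
  obtain ⟨ts⟩ := t
  simp only [phi_node]
  refine congrArg List.prod (List.map_congr_left fun s hs => ?_)
  exact A8_mulVec_apply_three_eq_four
    (phi_mem_of_order_le_three (by have := order_lt_order_node hs; omega))

lemma phi_dotProduct_M8_mulVec_phi_eq_zero {t₁ t₂ : RTree} (h₁ : t₁.order ≤ 4)
    (h₂ : t₂.order = 4) : t₁.phi ⬝ᵥ M8 *ᵥ t₂.phi = 0 := by
  obtain ⟨μ, hμ⟩ := exists_M8_mulVec_eq_smul (phi_mem_of_order_eq_four h₂)
  rw [hμ, dotProduct_smul, dotProduct_sub, dotProduct_single, dotProduct_single,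
    phi_apply_three_eq_four h₁, sub_self, smul_zero]

end RTree

theorem eight_stage_pseudo_symplectic_order_eight :
    (∀ Φ ∈ ({(fun _ => 1), c8, (fun i => (c8 i)^2),
        A8.mulVec c8} : Set (Fin 8 → ℝ)), M8.mulVec Φ = 0) ∧
    ∀ t₁ t₂ : RTree, t₁.order + t₂.order ≤ 8 →
      t₁.phi ⬝ᵥ M8.mulVec t₂.phi = 0 := by
  refine ⟨fun Φ hΦ => M8_mulVec_eq_zero hΦ, fun t₁ t₂ h => ?_⟩
  rcases le_or_gt t₂.order 3 with h₂ | h₂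
  · rw [M8_mulVec_eq_zero (RTree.phi_mem_of_order_le_three h₂), dotProduct_zero]
  rcases le_or_gt t₁.order 3 with h₁ | h₁
  · rw [dotProduct_mulVec, ← mulVec_transpose, M8_isSymm.eq,
      M8_mulVec_eq_zero (RTree.phi_mem_of_order_le_three h₁), zero_dotProduct]
  · exact RTree.phi_dotProduct_M8_mulVec_phi_eq_zero (by omega) (by omega)
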